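/- arXiv:2306.14496 — 3 statements merged into one kernel-verified Lean document; each statement's English description precedes it below -/
import Mathlib

section
/- Let U be a real Hilbert space, M : U → U a bounded self-adjoint positive semidefinite linear operator, c ∈ ℝ, d ∈ U, and J(u) = ⟨Mu,u⟩ + ⟨d,u⟩ + c. For each ε > 0 let u^ε be the unique minimizer of J^ε(u) = J(u) + ε‖u‖², and let V = inf_u J(u) and V^ε = inf_u J^ε(u). Then V^ε is nondecreasing in ε and lim_{ε→0} V^ε = V; moreover lim_{ε→0} J(u^ε) = V, i.e., (u^ε) is a minimizing sequence of J. -/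
/-!
Adding the penalty `ε ‖u‖²` can only raise `J`, and raises it more for larger `ε`, so `V^ε` is
nondecreasing and bounded below by `V`. Conversely, any `u` with `J u < b` still has
`J u + ε ‖u‖² < b` for small `ε`, so `V^ε → V`. Finally `V ≤ J(u^ε) ≤ J^ε(u^ε) = V^ε`, and the
minimizing property of `u^ε` follows by squeezing.
-/

open RealInnerProductSpace Topology Filter

section PenalizedInf

variable {α : Type*}

noncomputable def penalizedInf (f g : α → ℝ) (ε : ℝ) : EReal :=
  ⨅ u, ((f u + ε * g u : ℝ) : EReal)

variable {f g : α → ℝ}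

lemma penalizedInf_zero : penalizedInf f g 0 = ⨅ u, (f u : EReal) := by
  simp [penalizedInf]

lemma monotone_penalizedInf (hg : 0 ≤ g) : Monotone (penalizedInf f g) := fun _ _ h =>
  iInf_mono fun u => EReal.coe_le_coe_iff.2 <| add_le_add_right (mul_le_mul_of_nonneg_right h (hg u)) _

lemma iInf_le_penalizedInf (hg : 0 ≤ g) {ε : ℝ} (hε : 0 ≤ ε) :
    ⨅ u, (f u : EReal) ≤ penalizedInf f g ε :=
  penalizedInf_zero (g := g) ▸ monotone_penalizedInf hg hε

lemma tendsto_penalizedInf_nhdsGT_zero (hg : 0 ≤ g) :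
    Tendsto (penalizedInf f g) (𝓝[>] 0) (𝓝 (⨅ u, (f u : EReal))) := by
  rw [tendsto_order]
  refine ⟨fun a ha => ?_, fun b hb => ?_⟩
  · filter_upwards [self_mem_nhdsWithin] with ε hε
    exact ha.trans_le (iInf_le_penalizedInf hg (le_of_lt hε))
  · obtain ⟨u, hu⟩ := iInf_lt_iff.1 hb
    have hcont : Tendsto (fun ε : ℝ => ((f u + ε * g u : ℝ) : EReal)) (𝓝 0) (𝓝 (f u)) :=
      EReal.tendsto_coe.2 <| by
        simpa using ((tendsto_id (x := 𝓝 (0 : ℝ))).mul_const (g u)).const_add (f u)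
    filter_upwards [(hcont.mono_left nhdsWithin_le_nhds).eventually_lt_const hu] with ε hε
    exact (iInf_le _ u).trans_lt hε

lemma coe_le_penalizedInf_of_forall_le (hg : 0 ≤ g) {ε : ℝ} (hε : 0 ≤ ε) {x : α}
    (hx : ∀ u, f x + ε * g x ≤ f u + ε * g u) : (f x : EReal) ≤ penalizedInf f g ε :=
  le_iInf fun u => EReal.coe_le_coe_iff.2 <| by linarith [hx u, mul_nonneg hε (hg x)]

lemma tendsto_coe_of_forall_le_penalized (hg : 0 ≤ g) {x : ℝ → α}
    (hx : ∀ ε : ℝ, 0 < ε → ∀ u, f (x ε) + ε * g (x ε) ≤ f u + ε * g u) :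
    Tendsto (fun ε => (f (x ε) : EReal)) (𝓝[>] 0) (𝓝 (⨅ u, (f u : EReal))) :=
  tendsto_of_tendsto_of_tendsto_of_le_of_le' tendsto_const_nhds
    (tendsto_penalizedInf_nhdsGT_zero hg) (Eventually.of_forall fun _ => iInf_le _ _)
    (eventually_mem_nhdsWithin.mono fun ε hε =>
      coe_le_penalizedInf_of_forall_le hg (le_of_lt hε) (hx ε hε))

end PenalizedInf

theorem regularized_value_converges_and_minimizing_sequence_general
    {U : Type*} [NormedAddCommGroup U]
    (J : U → ℝ)
    (uE : ℝ → U)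
    (hmin : ∀ ε : ℝ, 0 < ε → ∀ u : U,
      J (uE ε) + ε * ‖uE ε‖ ^ 2 ≤ J u + ε * ‖u‖ ^ 2)
    (V : EReal) (hV : V = ⨅ u : U, ((J u : ℝ) : EReal))
    (Veps : ℝ → EReal)
    (hVeps : ∀ ε, Veps ε = ⨅ u : U, ((J u + ε * ‖u‖ ^ 2 : ℝ) : EReal)) :
    (∀ ε₁ ε₂ : ℝ, 0 < ε₁ → ε₁ ≤ ε₂ → Veps ε₁ ≤ Veps ε₂) ∧
    Tendsto Veps (𝓝[>] (0 : ℝ)) (𝓝 V) ∧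
    Tendsto (fun ε => ((J (uE ε) : ℝ) : EReal)) (𝓝[>] (0 : ℝ)) (𝓝 V) := by
  have hg : (0 : U → ℝ) ≤ fun u => ‖u‖ ^ 2 := fun u => by positivity
  obtain rfl : Veps = penalizedInf J (fun u => ‖u‖ ^ 2) := funext hVeps
  subst hV
  exact ⟨fun _ _ _ h => monotone_penalizedInf hg h, tendsto_penalizedInf_nhdsGT_zero hg,
    tendsto_coe_of_forall_le_penalized hg hmin⟩

theorem regularized_value_converges_and_minimizing_sequence
    {U : Type*} [NormedAddCommGroup U] [InnerProductSpace ℝ U] [CompleteSpace U]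
    (M : U →L[ℝ] U) (hM : IsSelfAdjoint M) (hpos : ∀ u : U, 0 ≤ ⟪M u, u⟫)
    (c : ℝ) (d : U) (J : U → ℝ) (hJ : ∀ u, J u = ⟪M u, u⟫ + ⟪d, u⟫ + c)
    (uE : ℝ → U)
    (hmin : ∀ ε : ℝ, 0 < ε → ∀ u : U,
      J (uE ε) + ε * ‖uE ε‖ ^ 2 ≤ J u + ε * ‖u‖ ^ 2)
    (huniq : ∀ ε : ℝ, 0 < ε → ∀ v : U,
      (∀ u : U, J v + ε * ‖v‖ ^ 2 ≤ J u + ε * ‖u‖ ^ 2) → v = uE ε)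
    (V : EReal) (hV : V = ⨅ u : U, ((J u : ℝ) : EReal))
    (Veps : ℝ → EReal)
    (hVeps : ∀ ε, Veps ε = ⨅ u : U, ((J u + ε * ‖u‖ ^ 2 : ℝ) : EReal)) :
    (∀ ε₁ ε₂ : ℝ, 0 < ε₁ → ε₁ ≤ ε₂ → Veps ε₁ ≤ Veps ε₂) ∧
    Tendsto Veps (𝓝[>] (0 : ℝ)) (𝓝 V) ∧
    Tendsto (fun ε => ((J (uE ε) : ℝ) : EReal)) (𝓝[>] (0 : ℝ)) (𝓝 V) :=
  regularized_value_converges_and_minimizing_sequence_general J uE hmin V hV Veps hVeps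
end

section
/- Let ω₀, ω₁, ω₂ be independent random variables with E ω_k = 0 and E ω_k² = 1. Define x₀ = ξ ∈ ℝ (deterministic, ξ ≠ 0), x_{k+1} = u_k + x_k ω_k, with controls u_k = λ ω_k for a constant λ ∈ ℝ, adapted appropriately. Then E x₃² = 3λ² + 2λξ + ξ², and the cost J = −E x₃² + Σ_{k=0}^{2} E u_k² equals −2λξ − ξ²; hence inf over λ ∈ ℝ of J is −∞. -/
open MeasureTheory ProbabilityTheory

/-!
The state `x_k` is a measurable function of `ω₀, …, ω_{k-1}` only, hence independent of `ω_k`.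
Writing `x_{k+1} = (λ + x_k) ω_k`, independence with `E ω_k = 0`, `E ω_k² = 1` gives
`E x_{k+1} = 0` and `E x_{k+1}² = E (λ + x_k)² = λ² + 2λ E x_k + E x_k²`. Starting from `x₀ = ξ`
this yields `E x₃² = 3λ² + 2λξ + ξ²`, so the cost `-2λξ - ξ²` is affine in `λ` with slope
`-2ξ ≠ 0` and unbounded below.
-/

namespace ProbabilityTheory

variable {Ω ι β : Type*} [mβ : MeasurableSpace β]

section Past

variable [Preorder ι]

abbrev pastSigma (w : ι → Ω → β) (j : ι) : MeasurableSpace Ω :=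
  ⨆ i ∈ Set.Iio j, MeasurableSpace.comap (w i) mβ

lemma pastSigma_mono (w : ι → Ω → β) {i j : ι} (hij : i ≤ j) :
    pastSigma w i ≤ pastSigma w j :=
  biSup_mono fun _ hk => lt_of_lt_of_le hk hij

lemma measurable_pastSigma (w : ι → Ω → β) {i j : ι} (hij : i < j) :
    Measurable[pastSigma w j] (w i) :=
  (comap_measurable (w i)).mono (le_iSup₂_of_le i hij le_rfl) le_rfl

lemma iIndepFun.indepFun_of_measurable_pastSigma {mΩ : MeasurableSpace Ω} {μ : Measure Ω}
    {γ : Type*} [MeasurableSpace γ] {w : ι → Ω → β} (hw : ∀ i, Measurable (w i))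
    (h : iIndepFun w μ) {j : ι} {Y : Ω → γ} (hY : Measurable[pastSigma w j] Y) :
    IndepFun Y (w j) μ := by
  have hpast : Indep (pastSigma w j) (⨆ i ∈ ({j} : Set ι), MeasurableSpace.comap (w i) mβ) μ :=
    indep_iSup_of_disjoint (fun i => (hw i).comap_le) h.iIndep
      (Set.disjoint_singleton_right.mpr (lt_irrefl j))
  rw [iSup_singleton] at hpast
  exact indep_of_indep_of_le_left hpast hY.comap_le

end Past

lemma measurable_pastSigma_of_recursion {n : ℕ} {w : Fin (n + 1) → Ω → ℝ} {Y : ℕ → Ω → ℝ}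
    {f : ℝ × ℝ → ℝ} (hf : Measurable f) (c : ℝ) (hY0 : Y 0 = fun _ => c)
    (hrec : ∀ k : Fin (n + 1), Y (k + 1) = fun ω => f (Y k ω, w k ω)) (k : Fin (n + 1)) :
    Measurable[pastSigma w k] (Y k) := by
  induction k using Fin.induction with
  | zero => simp [hY0]
  | succ i ih =>
    rw [Fin.val_succ, ← Fin.val_castSucc, hrec]
    refine hf.comp (Measurable.prodMk ?_ (measurable_pastSigma w i.castSucc_lt_succ))
    exact ih.mono (pastSigma_mono w (Fin.castSucc_le_succ i)) le_rfl

section Moments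

variable {mΩ : MeasurableSpace Ω} {μ : Measure Ω} {Y W : Ω → ℝ}

lemma IndepFun.sq (h : IndepFun Y W μ) : IndepFun (fun ω => Y ω ^ 2) (fun ω => W ω ^ 2) μ :=
  h.comp (measurable_id.pow_const 2) (measurable_id.pow_const 2)

lemma IndepFun.const_add_left (h : IndepFun Y W μ) (c : ℝ) :
    IndepFun (fun ω => c + Y ω) W μ :=
  h.comp (measurable_const_add c) measurable_id

lemma IndepFun.integrable_mul_sq (h : IndepFun Y W μ) (hY : MemLp Y 2 μ) (hW : MemLp W 2 μ) :
    Integrable (fun ω => (Y ω * W ω) ^ 2) μ := by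
  simp_rw [mul_pow]
  exact h.sq.integrable_mul hY.integrable_sq hW.integrable_sq

lemma IndepFun.integral_mul_sq (h : IndepFun Y W μ) (hY : MemLp Y 2 μ) (hW : MemLp W 2 μ) :
    ∫ ω, (Y ω * W ω) ^ 2 ∂μ = (∫ ω, Y ω ^ 2 ∂μ) * ∫ ω, W ω ^ 2 ∂μ := by
  simp_rw [mul_pow]
  exact h.sq.integral_fun_mul_eq_mul_integral hY.integrable_sq.aestronglyMeasurable
    hW.integrable_sq.aestronglyMeasurable

lemma IndepFun.memLp_two_mul (h : IndepFun Y W μ) (hY : MemLp Y 2 μ) (hW : MemLp W 2 μ) :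
    MemLp (fun ω => Y ω * W ω) 2 μ :=
  (memLp_two_iff_integrable_sq (hY.1.mul hW.1)).2 (h.integrable_mul_sq hY hW)

variable [IsProbabilityMeasure μ]

lemma integral_const_add_sq (hY : MemLp Y 2 μ) (c : ℝ) :
    ∫ ω, (c + Y ω) ^ 2 ∂μ = c ^ 2 + 2 * c * ∫ ω, Y ω ∂μ + ∫ ω, Y ω ^ 2 ∂μ := by
  have hY1 : Integrable (fun ω => 2 * c * Y ω) μ := (hY.integrable one_le_two).const_mul _
  simp_rw [add_sq]
  rw [integral_add (f := fun ω => c ^ 2 + 2 * c * Y ω) ((integrable_const _).add hY1)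
    hY.integrable_sq, integral_add (integrable_const _) hY1, integral_const_mul]
  simp

lemma IndepFun.memLp_two_const_add_mul (h : IndepFun Y W μ) (hY : MemLp Y 2 μ)
    (hW : MemLp W 2 μ) (c : ℝ) : MemLp (fun ω => (c + Y ω) * W ω) 2 μ :=
  (h.const_add_left c).memLp_two_mul ((memLp_const c).add hY) hW

lemma IndepFun.integral_const_add_mul (h : IndepFun Y W μ) (hY : MemLp Y 2 μ)
    (hW : MemLp W 2 μ) (hW1 : ∫ ω, W ω ∂μ = 0) (c : ℝ) : ∫ ω, (c + Y ω) * W ω ∂μ = 0 := by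
  rw [(h.const_add_left c).integral_fun_mul_eq_mul_integral
    ((memLp_const c).add hY).1 hW.1, hW1, mul_zero]

lemma IndepFun.integral_const_add_mul_sq (h : IndepFun Y W μ) (hY : MemLp Y 2 μ)
    (hW : MemLp W 2 μ) (hW2 : ∫ ω, W ω ^ 2 ∂μ = 1) (c : ℝ) :
    ∫ ω, ((c + Y ω) * W ω) ^ 2 ∂μ = c ^ 2 + 2 * c * ∫ ω, Y ω ∂μ + ∫ ω, Y ω ^ 2 ∂μ := by
  rw [(h.const_add_left c).integral_mul_sq ((memLp_const c).add hY) hW, hW2, mul_one,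
    integral_const_add_sq hY c]

end Moments

end ProbabilityTheory

section ControlledRecursion

variable {Ω : Type*} {mΩ : MeasurableSpace Ω} {μ : Measure Ω} [IsProbabilityMeasure μ]
  {n : ℕ} {w : Fin (n + 1) → Ω → ℝ} {X : ℕ → Ω → ℝ} {lam ξ : ℝ}

lemma moments_succ_of_recursion (hmeas : ∀ k, Measurable (w k)) (hindep : iIndepFun w μ)
    (hL2 : ∀ k, MemLp (w k) 2 μ) (hmean : ∀ k, ∫ ω, w k ω ∂μ = 0)
    (hvar : ∀ k, ∫ ω, w k ω ^ 2 ∂μ = 1) (hX0 : X 0 = fun _ => ξ)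
    (hXrec : ∀ k : Fin (n + 1), X (k + 1) = fun ω => lam * w k ω + X k ω * w k ω)
    (k : Fin (n + 1)) (hk : MemLp (X k) 2 μ) :
    MemLp (X (k + 1)) 2 μ ∧ ∫ ω, X (k + 1) ω ∂μ = 0 ∧
      ∫ ω, X (k + 1) ω ^ 2 ∂μ = lam ^ 2 + 2 * lam * ∫ ω, X k ω ∂μ + ∫ ω, X k ω ^ 2 ∂μ := by
  have hind : IndepFun (X k) (w k) μ :=
    hindep.indepFun_of_measurable_pastSigma hmeas <|
      measurable_pastSigma_of_recursion (f := fun p => lam * p.2 + p.1 * p.2) (by fun_prop) ξ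
        hX0 hXrec k
  have hrec : X (k + 1) = fun ω => (lam + X k ω) * w k ω := by
    rw [hXrec]; ext; ring
  rw [hrec]
  exact ⟨hind.memLp_two_const_add_mul hk (hL2 k) lam,
    hind.integral_const_add_mul hk (hL2 k) (hmean k) lam,
    hind.integral_const_add_mul_sq hk (hL2 k) (hvar k) lam⟩

lemma integral_sq_of_recursion (hmeas : ∀ k, Measurable (w k)) (hindep : iIndepFun w μ)
    (hL2 : ∀ k, MemLp (w k) 2 μ) (hmean : ∀ k, ∫ ω, w k ω ∂μ = 0)
    (hvar : ∀ k, ∫ ω, w k ω ^ 2 ∂μ = 1) (hX0 : X 0 = fun _ => ξ)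
    (hXrec : ∀ k : Fin (n + 1), X (k + 1) = fun ω => lam * w k ω + X k ω * w k ω)
    {k : ℕ} (hk : k ≤ n) :
    ∫ ω, X (k + 1) ω ^ 2 ∂μ = (k + 1) * lam ^ 2 + 2 * lam * ξ + ξ ^ 2 := by
  have hmoments : MemLp (X (k + 1)) 2 μ ∧ ∫ ω, X (k + 1) ω ∂μ = 0 ∧
      ∫ ω, X (k + 1) ω ^ 2 ∂μ = (k + 1) * lam ^ 2 + 2 * lam * ξ + ξ ^ 2 := by
    induction k with
    | zero =>
      have h0 : MemLp (X 0) 2 μ := by rw [hX0]; exact memLp_const ξ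
      obtain ⟨hL, hm, hs⟩ :=
        moments_succ_of_recursion hmeas hindep hL2 hmean hvar hX0 hXrec 0 h0
      refine ⟨hL, hm, ?_⟩
      simp only [Fin.val_zero] at hs
      simp only [hs, hX0, integral_const, probReal_univ, smul_eq_mul, one_mul]
      ring
    | succ k ih =>
      obtain ⟨hL, hm, hs⟩ := ih (by omega)
      obtain ⟨hL', hm', hs'⟩ :=
        moments_succ_of_recursion hmeas hindep hL2 hmean hvar hX0 hXrec ⟨k + 1, by omega⟩ hL
      refine ⟨hL', hm', ?_⟩
      rw [hs', hm, hs]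
      push_cast
      ring
  exact hmoments.2.2

end ControlledRecursion

lemma not_bddBelow_range_mul_add {a : ℝ} (ha : a ≠ 0) (b : ℝ) :
    ¬ BddBelow (Set.range fun x => a * x + b) := by
  rintro ⟨m, hm⟩
  have := hm ⟨(m - b - 1) / a, rfl⟩
  simp only [mul_div_cancel₀ _ ha] at this
  linarith

theorem example51_value_unbounded
    {Ω : Type*} [MeasurableSpace Ω] (μ : Measure Ω) [IsProbabilityMeasure μ]
    (w : Fin 3 → Ω → ℝ)
    (hmeas : ∀ k, Measurable (w k))
    (hindep : iIndepFun w μ)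
    (hL2 : ∀ k, MemLp (w k) 2 μ)
    (hmean : ∀ k, ∫ ω, w k ω ∂μ = 0)
    (hvar : ∀ k, ∫ ω, (w k ω) ^ 2 ∂μ = 1)
    (ξ : ℝ) (hξ : ξ ≠ 0)
    (X : ℝ → ℕ → Ω → ℝ)
    (hX0 : ∀ lam : ℝ, X lam 0 = fun _ => ξ)
    (hXrec : ∀ lam : ℝ, ∀ k : Fin 3,
      X lam ((k : ℕ) + 1) = fun ω => lam * w k ω + X lam (k : ℕ) ω * w k ω)
    (J : ℝ → ℝ)
    (hJ : ∀ lam : ℝ,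
      J lam = -∫ ω, (X lam 3 ω) ^ 2 ∂μ + ∑ k : Fin 3, ∫ ω, (lam * w k ω) ^ 2 ∂μ) :
    (∀ lam : ℝ,
      (∫ ω, (X lam 3 ω) ^ 2 ∂μ = 3 * lam ^ 2 + 2 * lam * ξ + ξ ^ 2) ∧
      J lam = -2 * lam * ξ - ξ ^ 2) ∧
    ¬ BddBelow (Set.range J) := by
  have hsecond : ∀ lam, ∫ ω, (X lam 3 ω) ^ 2 ∂μ = 3 * lam ^ 2 + 2 * lam * ξ + ξ ^ 2 := by
    intro lam
    have h := integral_sq_of_recursion hmeas hindep hL2 hmean hvar (hX0 lam) (hXrec lam)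
      (k := 2) le_rfl
    norm_num at h
    exact h
  have hcost : ∀ lam, ∑ k : Fin 3, ∫ ω, (lam * w k ω) ^ 2 ∂μ = 3 * lam ^ 2 := by
    intro lam
    simp [mul_pow, integral_const_mul, hvar]
  have hJval : ∀ lam, J lam = -2 * lam * ξ - ξ ^ 2 := by
    intro lam; rw [hJ, hsecond, hcost]; ring
  refine ⟨fun lam => ⟨hsecond lam, hJval lam⟩, ?_⟩
  have hJaff : J = fun lam => (-2 * ξ) * lam + -ξ ^ 2 := by
    ext lam; rw [hJval]; ring
  rw [hJaff]
  exact not_bddBelow_range_mul_add (by simpa using hξ) _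
end

section
/- Let U be a real Hilbert space, J(u) = ⟨Mu,u⟩ + ⟨d,u⟩ + c with M bounded self-adjoint, M ≥ 0, and suppose inf J > −∞ with minimizer v*. For ε > 0 let u^ε be the unique minimizer of J + ε‖·‖². If u^{ε_n} ⇀ u* weakly along a sequence ε_n → 0, then u* minimizes J and ‖u^{ε_n}‖ → ‖u*‖, hence u^{ε_n} → u* strongly in U. -/
/-!
The limit `u*` inherits minimality from the regularized minimizers because `J` is convex: the
tangent plane of `J` at `u*` is a weakly continuous minorant of `J`, so
`J u* ≤ liminf J (u^{ε_n}) ≤ lim (J u + ε_n ‖u‖²) = J u`. Comparing the regularized functional at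
`u^{ε}` and at the minimizer `u*` of `J` gives `‖u^{ε}‖ ≤ ‖u*‖`, and in a Hilbert space weak
convergence together with this norm bound forces `‖u^{ε_n} - u*‖² → 0`.
-/

open RealInnerProductSpace Topology Filter

theorem norm_le_of_forall_le_of_add_mul_norm_sq_le {E : Type*} [SeminormedAddGroup E]
    {J : E → ℝ} {w x : E} {ε : ℝ}
    (hε : 0 < ε) (hw : ∀ u, J w ≤ J u) (hx : J x + ε * ‖x‖ ^ 2 ≤ J w + ε * ‖w‖ ^ 2) :
    ‖x‖ ≤ ‖w‖ := by
  have hsq : ε * ‖x‖ ^ 2 ≤ ε * ‖w‖ ^ 2 := by linarith [hw x]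
  exact (pow_le_pow_iff_left₀ (norm_nonneg x) (norm_nonneg w) two_ne_zero).mp
    (le_of_mul_le_mul_left hsq hε)

section

variable {U : Type*} [NormedAddCommGroup U] [InnerProductSpace ℝ U]

theorem LinearMap.IsSymmetric.inner_map_self_add_two_mul_inner_le {T : U →ₗ[ℝ] U}
    (hT : T.IsSymmetric) (hpos : ∀ u, 0 ≤ ⟪T u, u⟫) (u v : U) :
    ⟪T v, v⟫ + 2 * ⟪T v, u - v⟫ ≤ ⟪T u, u⟫ := by
  obtain ⟨h, rfl⟩ : ∃ h, u = v + h := ⟨u - v, by abel⟩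
  have hexpand : ⟪T (v + h), v + h⟫ = ⟪T v, v⟫ + 2 * ⟪T v, h⟫ + ⟪T h, h⟫ := by
    rw [map_add, inner_add_left, inner_add_right, inner_add_right, hT h v, real_inner_comm h]
    ring
  rw [hexpand, add_sub_cancel_left]
  linarith [hpos h]

theorem le_of_subgradient_of_tendsto_inner {f : U → ℝ} {g x : U} {u : ℕ → U}
    {b : ℕ → ℝ} {B : ℝ} (hg : ∀ y, f x + ⟪g, y - x⟫ ≤ f y)
    (hu : ∀ w, Tendsto (fun n => ⟪w, u n⟫) atTop (𝓝 ⟪w, x⟫))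
    (hb : Tendsto b atTop (𝓝 B)) (hfb : ∀ n, f (u n) ≤ b n) : f x ≤ B := by
  have hminorant : Tendsto (fun n => f x + ⟪g, u n - x⟫) atTop (𝓝 (f x)) := by
    simpa only [inner_sub_right, sub_self, add_zero] using
      ((hu g).sub_const ⟪g, x⟫).const_add (f x)
  exact le_of_tendsto_of_tendsto' hminorant hb fun n => (hg (u n)).trans (hfb n)

theorem tendsto_of_tendsto_inner_of_norm_le {u : ℕ → U} {x : U}
    (hu : ∀ w, Tendsto (fun n => ⟪w, u n⟫) atTop (𝓝 ⟪w, x⟫)) (hnorm : ∀ n, ‖u n‖ ≤ ‖x‖) :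
    Tendsto u atTop (𝓝 x) := by
  have hbound : Tendsto (fun n => 2 * ‖x‖ ^ 2 - 2 * ⟪x, u n⟫) atTop (𝓝 0) := by
    have := ((hu x).const_mul 2).const_sub (2 * ‖x‖ ^ 2)
    rwa [real_inner_self_eq_norm_sq, sub_self] at this
  have hsq : Tendsto (fun n => ‖u n - x‖ ^ 2) atTop (𝓝 0) := by
    refine squeeze_zero (fun n => by positivity) (fun n => ?_) hbound
    rw [norm_sub_sq_real, real_inner_comm]
    nlinarith [hnorm n, norm_nonneg (u n)]
  rw [tendsto_iff_norm_sub_tendsto_zero]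
  simpa [Real.sqrt_sq (norm_nonneg _)] using hsq.sqrt

end

theorem weak_convergence_of_regularized_minimizers_implies_strong_general
    {U : Type*} [NormedAddCommGroup U] [InnerProductSpace ℝ U] [CompleteSpace U]
    (M : U →L[ℝ] U) (hM : IsSelfAdjoint M) (hpos : ∀ u : U, 0 ≤ ⟪M u, u⟫)
    (c : ℝ) (d : U) (J : U → ℝ) (hJ : ∀ u, J u = ⟪M u, u⟫ + ⟪d, u⟫ + c)
    (uE : ℝ → U)
    (hmin : ∀ ε : ℝ, 0 < ε → ∀ u : U,
      J (uE ε) + ε * ‖uE ε‖ ^ 2 ≤ J u + ε * ‖u‖ ^ 2)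
    (εn : ℕ → ℝ) (hεpos : ∀ n, 0 < εn n)
    (hεlim : Tendsto εn atTop (𝓝 0))
    (ustar : U)
    (hweak : ∀ w : U,
      Tendsto (fun n => ⟪w, uE (εn n)⟫) atTop (𝓝 ⟪w, ustar⟫)) :
    (∀ u, J ustar ≤ J u) ∧
    Tendsto (fun n => ‖uE (εn n)‖) atTop (𝓝 ‖ustar‖) ∧
    Tendsto (fun n => uE (εn n)) atTop (𝓝 ustar) := by
  have hsubgradient : ∀ u, J ustar + ⟪(2 : ℝ) • M ustar + d, u - ustar⟫ ≤ J u := by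
    intro u
    have hquad := hM.isSymmetric.inner_map_self_add_two_mul_inner_le hpos u ustar
    simp only [ContinuousLinearMap.coe_coe] at hquad
    rw [hJ, hJ, inner_add_left, real_inner_smul_left, inner_sub_right d]
    linarith
  have hminimizer : ∀ u, J ustar ≤ J u := fun u =>
    le_of_subgradient_of_tendsto_inner hsubgradient hweak
      (by simpa using (hεlim.mul_const (‖u‖ ^ 2)).const_add (J u))
      fun n => by
        linarith [hmin (εn n) (hεpos n) u, mul_nonneg (hεpos n).le (sq_nonneg ‖uE (εn n)‖)]
  have hstrong : Tendsto (fun n => uE (εn n)) atTop (𝓝 ustar) :=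
    tendsto_of_tendsto_inner_of_norm_le hweak fun n =>
      norm_le_of_forall_le_of_add_mul_norm_sq_le (hεpos n) hminimizer (hmin _ (hεpos n) ustar)
  exact ⟨hminimizer, (continuous_norm.tendsto ustar).comp hstrong, hstrong⟩

theorem weak_convergence_of_regularized_minimizers_implies_strong
    {U : Type*} [NormedAddCommGroup U] [InnerProductSpace ℝ U] [CompleteSpace U]
    (M : U →L[ℝ] U) (hM : IsSelfAdjoint M) (hpos : ∀ u : U, 0 ≤ ⟪M u, u⟫)
    (c : ℝ) (d : U) (J : U → ℝ) (hJ : ∀ u, J u = ⟪M u, u⟫ + ⟪d, u⟫ + c)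
    (vstar : U) (hvstar : ∀ u, J vstar ≤ J u)
    (uE : ℝ → U)
    (hmin : ∀ ε : ℝ, 0 < ε → ∀ u : U,
      J (uE ε) + ε * ‖uE ε‖ ^ 2 ≤ J u + ε * ‖u‖ ^ 2)
    (huniq : ∀ ε : ℝ, 0 < ε → ∀ v : U,
      (∀ u : U, J v + ε * ‖v‖ ^ 2 ≤ J u + ε * ‖u‖ ^ 2) → v = uE ε)
    (εn : ℕ → ℝ) (hεpos : ∀ n, 0 < εn n)
    (hεlim : Tendsto εn atTop (𝓝 0))
    (ustar : U)
    (hweak : ∀ w : U,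
      Tendsto (fun n => ⟪w, uE (εn n)⟫) atTop (𝓝 ⟪w, ustar⟫)) :
    (∀ u, J ustar ≤ J u) ∧
    Tendsto (fun n => ‖uE (εn n)‖) atTop (𝓝 ‖ustar‖) ∧
    Tendsto (fun n => uE (εn n)) atTop (𝓝 ustar) :=
  weak_convergence_of_regularized_minimizers_implies_strong_general M hM hpos c d J hJ uE hmin εn
    hεpos hεlim ustar hweak
end
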